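/- arXiv:1304.8118 — 4 statements merged into one kernel-verified Lean document; each statement's English description precedes it below -/
import Mathlib

section
/- Let (Ω, F, μ) be a complete finite measure space, Y a separable Banach space, and P : Ω → 2^Y a nonempty-valued, integrably bounded set-valued map with measurable graph. Then the set S¹_P = {x ∈ L¹(μ, Y) : x(ω) ∈ P(ω) μ-a.e.} is nonempty. -/
open MeasureTheory Set Filter Topology
open scoped ENNReal

/-!
A measurable graph `G ⊆ Ω × ℝ` is the preimage, under `f × id` for a measurable code
`f : Ω → (ℕ → Bool)`, of a Borel set `G'` of the Polish space `(ℕ → Bool) × ℝ`, so `G'` is a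
continuous image `φ(ℕ^ℕ)`. For the finite measure `f_* μ`, the projection of `G'` is exhausted up
to `ε` by the projection of `φ(K)` for a compact box `K ⊆ ℕ^ℕ`, built one coordinate at a time
by continuity of measure from below. Above the projection of the compact set `φ(K)`, the lowest
point of each section is a Borel selection; composed with `f` it selects from `G` off a set of
measure `ε`, and gluing these selections as `ε → 0` selects almost everywhere. A standard Borel
`Y` embeds measurably into `ℝ`, and the selection is integrable because the bound dominates it.
-/

theorem MeasurableSet.exists_eq_preimage_prodMap {Ω R : Type*} [MeasurableSpace Ω]
    [MeasurableSpace R] {G : Set (Ω × R)} (hG : MeasurableSet G) :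
    ∃ (f : Ω → ℕ → Bool) (G' : Set ((ℕ → Bool) × R)),
      Measurable f ∧ MeasurableSet G' ∧ G = Prod.map f id ⁻¹' G' := by
  classical
  rw [← generateFrom_prod] at hG
  induction G, hG using MeasurableSpace.generateFrom_induction with
  | hC t ht _ =>
    obtain ⟨A, hA, B, hB, rfl⟩ := ht
    refine ⟨fun ω _ => decide (ω ∈ A), ((fun c : ℕ → Bool => c 0) ⁻¹' {true}) ×ˢ B,
      measurable_pi_lambda _ fun _ => measurable_to_bool (by simpa [preimage] using hA),
      ((measurable_pi_apply 0) (measurableSet_singleton true)).prod hB, ?_⟩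
    ext; simp
  | empty => exact ⟨fun _ _ => false, ∅, measurable_const, .empty, rfl⟩
  | compl t _ ih =>
    obtain ⟨f, G', hf, hG', rfl⟩ := ih
    exact ⟨f, G'ᶜ, hf, hG'.compl, rfl⟩
  | iUnion s _ ih =>
    choose f G' hf hG' hs using ih
    -- interleave the countably many codes `f n` into one through `ℕ × ℕ ≃ ℕ`
    let e : (ℕ → Bool) ≃ᵐ (ℕ → ℕ → Bool) :=
      (MeasurableEquiv.piCongrLeft (fun _ => Bool) Nat.pairEquiv).symm.trans
        (MeasurableEquiv.curry ℕ ℕ Bool)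
    refine ⟨fun ω => e.symm fun n => f n ω, ⋃ n, Prod.map (fun c => e c n) id ⁻¹' G' n,
      e.symm.measurable.comp (measurable_pi_lambda _ hf),
      .iUnion fun n => (((measurable_pi_apply n).comp e.measurable).prodMap measurable_id) (hG' n),
      ?_⟩
    simp_rw [preimage_iUnion, ← preimage_comp, hs]
    congr! with n
    ext p
    · simp
    · rfl

theorem iInter_closure_image_subset_image {X : Type*} [TopologicalSpace X] [T2Space X]
    [FirstCountableTopology X] {φ : (ℕ → ℕ) → X} (hφ : Continuous φ) (τ : ℕ → ℕ) :
    ⋂ n, closure (φ '' {σ | ∀ i < n, σ i ≤ τ i}) ⊆ φ '' {σ | ∀ i, σ i ≤ τ i} := by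
  intro y hy
  obtain ⟨U, hU⟩ := (𝓝 y).exists_antitone_basis
  have hσ : ∀ n, ∃ σ, (∀ i < n, σ i ≤ τ i) ∧ φ σ ∈ U n := fun n => by
    obtain ⟨_, hyU, σ, hσ, rfl⟩ :=
      mem_closure_iff_nhds.mp (mem_iInter.mp hy n) (U n) (hU.mem_of_mem trivial)
    exact ⟨σ, hσ, hyU⟩
  choose σ hστ hσU using hσ
  -- the `σ n` are bounded coordinatewise: by `τ i` once `n > i`, and by finitely many values before
  have hbox : ∀ n, σ n ∈ univ.pi fun i => Iic (τ i + ∑ m ∈ Finset.range (i + 1), σ m i) := by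
    intro n i _
    rcases lt_or_ge i n with hin | hni
    · exact (hστ n i hin).trans (Nat.le_add_right _ _)
    · exact (Finset.single_le_sum (f := fun m => σ m i) (fun _ _ => Nat.zero_le _)
        (Finset.mem_range.mpr (Nat.lt_succ_of_le hni))).trans (Nat.le_add_left _ _)
  obtain ⟨σ₀, -, k, hk, hlim⟩ :=
    (isCompact_univ_pi fun i => (finite_Iic _).isCompact).tendsto_subseq hbox
  refine ⟨σ₀, fun i => ?_, tendsto_nhds_unique ((hφ.tendsto σ₀).comp hlim)
    (hU.tendsto fun m => hU.antitone (hk.le_apply) (hσU (k m)))⟩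
  refine le_of_tendsto (((continuous_apply i).tendsto σ₀).comp hlim) ?_
  filter_upwards [eventually_gt_atTop i] with m hm
  exact hστ (k m) i (hm.trans_le hk.le_apply)

theorem exists_isCompact_measure_range_le_add {X : Type*} [TopologicalSpace X] [T2Space X]
    [FirstCountableTopology X] [MeasurableSpace X] [OpensMeasurableSpace X]
    (ν : Measure X) [IsFiniteMeasure ν] {φ : (ℕ → ℕ) → X} (hφ : Continuous φ)
    {ε : ℝ≥0∞} (hε : ε ≠ 0) :
    ∃ K, IsCompact K ∧ ν (range φ) ≤ ν (φ '' K) + ε := by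
  let Large : Set (ℕ → ℕ) → Prop := fun S => ν (range φ) < ν (φ '' S) + ε
  have hstep : ∀ (S : {S // Large S}) (n : ℕ), ∃ m, Large {σ ∈ S.1 | σ n ≤ m} := by
    rintro ⟨S, hS⟩ n
    have hmono : Monotone fun m => φ '' {σ ∈ S | σ n ≤ m} :=
      fun a b hab => image_mono fun σ hσ => ⟨hσ.1, hσ.2.trans hab⟩
    have hS_eq : φ '' S = ⋃ m, φ '' {σ ∈ S | σ n ≤ m} := by
      rw [← image_iUnion]
      congr 1
      ext σ
      simpa using fun _ => ⟨σ n, le_rfl⟩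
    dsimp only [Large] at hS ⊢
    rwa [hS_eq, hmono.measure_iUnion, ENNReal.iSup_add, lt_iSup_iff] at hS
  choose M hM using hstep
  -- cut `σ n` down to `τ n` one coordinate at a time, keeping the image large
  let E : ℕ → {S // Large S} := fun n => Nat.rec
    ⟨univ, by simpa [Large] using ENNReal.lt_add_right (measure_ne_top ν _) hε⟩
    (fun n S => ⟨_, hM S n⟩) n
  let τ : ℕ → ℕ := fun n => M (E n) n
  have hE : ∀ n, (E n).1 ⊆ {σ | ∀ i < n, σ i ≤ τ i} := by
    intro n
    induction n with
    | zero => simp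
    | succ n ih =>
      rintro σ ⟨hσ, hσn⟩ i hi
      rcases Nat.lt_succ_iff_lt_or_eq.mp hi with hi | rfl
      exacts [ih hσ i hi, hσn]
  let D : ℕ → Set X := fun n => closure (φ '' {σ | ∀ i < n, σ i ≤ τ i})
  have hD : Antitone D := fun a b hab =>
    closure_mono (image_mono fun σ hσ i hi => hσ i (hi.trans_le hab))
  have hLarge : ∀ n, ν (range φ) ≤ ν (D n) + ε := fun n =>
    (E n).2.le.trans (by gcongr; exact (image_mono (hE n)).trans subset_closure)
  refine ⟨{σ | ∀ i, σ i ≤ τ i}, ?_, ?_⟩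
  · simpa [Set.pi, ← Iic_def] using isCompact_univ_pi fun i => (finite_Iic (τ i)).isCompact
  · calc ν (range φ) ≤ (⨅ n, ν (D n)) + ε := by rw [ENNReal.iInf_add]; exact le_iInf hLarge
      _ = ν (⋂ n, D n) + ε := by
        rw [hD.measure_iInter (fun n => isClosed_closure.measurableSet.nullMeasurableSet)
          ⟨0, measure_ne_top ν _⟩]
      _ ≤ ν (φ '' {σ | ∀ i, σ i ≤ τ i}) + ε := by
        gcongr; exact iInter_closure_image_subset_image hφ τ

theorem MeasureTheory.AnalyticSet.exists_isCompact_subset_measure_image_fst_le_add {X Z : Type*}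
    [TopologicalSpace X] [T2Space X] [FirstCountableTopology X] [MeasurableSpace X]
    [OpensMeasurableSpace X] [TopologicalSpace Z] (ν : Measure X) [IsFiniteMeasure ν]
    {G : Set (X × Z)} (hG : AnalyticSet G) {ε : ℝ≥0∞} (hε : ε ≠ 0) :
    ∃ L ⊆ G, IsCompact L ∧ ν (Prod.fst '' G) ≤ ν (Prod.fst '' L) + ε := by
  rw [AnalyticSet] at hG
  rcases hG with rfl | ⟨φ, hφ, rfl⟩
  · exact ⟨∅, subset_rfl, isCompact_empty, by simp⟩
  obtain ⟨K, hK, hνK⟩ := exists_isCompact_measure_range_le_add ν (continuous_fst.comp hφ) hε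
  refine ⟨φ '' K, image_subset_range φ K, hK.image hφ, ?_⟩
  rwa [← range_comp, ← image_comp]

theorem IsCompact.exists_measurable_mem {C : Type*} [TopologicalSpace C] [T2Space C]
    [MeasurableSpace C] [OpensMeasurableSpace C] {L : Set (C × ℝ)} (hL : IsCompact L) :
    ∃ g : C → ℝ, Measurable g ∧ ∀ c ∈ Prod.fst '' L, (c, g c) ∈ L := by
  have hS : ∀ c, IsCompact {y | (c, y) ∈ L} := fun c =>
    (hL.image continuous_snd).of_isClosed_subset
      (hL.isClosed.preimage (Continuous.prodMk_right c)) fun y hy => ⟨_, hy, rfl⟩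
  have hmin : ∀ c ∈ Prod.fst '' L, (c, sInf {y | (c, y) ∈ L}) ∈ L := by
    rintro c ⟨⟨c, y⟩, hy, rfl⟩
    exact (hS c).sInf_mem ⟨y, hy⟩
  refine ⟨fun c => sInf {y | (c, y) ∈ L}, measurable_of_Iic fun a => ?_, hmin⟩
  -- off `Prod.fst '' L` the section is empty and `sInf ∅ = 0`
  have hpre : (fun c => sInf {y | (c, y) ∈ L}) ⁻¹' Iic a =
      Prod.fst '' (L ∩ {p | p.2 ≤ a}) ∪ (Prod.fst '' L)ᶜ ∩ {_c | 0 ≤ a} := by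
    ext c
    by_cases hc : c ∈ Prod.fst '' L
    · simp only [mem_preimage, mem_Iic, mem_union, mem_inter_iff, mem_compl_iff, hc,
        not_true_eq_false, false_and, or_false]
      refine ⟨fun h => ⟨_, ⟨hmin c hc, h⟩, rfl⟩, ?_⟩
      rintro ⟨⟨c, y⟩, ⟨hy, hya⟩, rfl⟩
      exact (csInf_le (hS c).bddBelow hy).trans hya
    · have hempty : {y | (c, y) ∈ L} = ∅ :=
        eq_empty_of_forall_notMem fun y hy => hc ⟨(c, y), hy, rfl⟩
      have hc' : c ∉ Prod.fst '' (L ∩ {p | p.2 ≤ a}) :=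
        fun h => hc (image_mono inter_subset_left h)
      simp [hempty, hc, hc']
  rw [hpre]
  have hfst : ∀ {L' : Set (C × ℝ)}, IsCompact L' → MeasurableSet (Prod.fst '' L') :=
    fun h => (h.image continuous_fst).isClosed.measurableSet
  exact (hfst (hL.inter_right (isClosed_le continuous_snd continuous_const))).union
    ((hfst hL).compl.inter (.const _))

theorem MeasurableSet.exists_measurable_mem_on_measure_compl_le {Ω : Type*} [MeasurableSpace Ω]
    (μ : Measure Ω) [IsFiniteMeasure μ] {G : Set (Ω × ℝ)} (hG : MeasurableSet G)
    (hne : ∀ ω, ∃ y, (ω, y) ∈ G) {ε : ℝ≥0∞} (hε : ε ≠ 0) :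
    ∃ (B : Set Ω) (x : Ω → ℝ), MeasurableSet B ∧ Measurable x ∧ μ Bᶜ ≤ ε ∧
      ∀ ω ∈ B, (ω, x ω) ∈ G := by
  obtain ⟨f, G', hf, hG', rfl⟩ := hG.exists_eq_preimage_prodMap
  have : PolishSpace (ℕ → Bool) := {}
  obtain ⟨L, hLG, hL, hνL⟩ :=
    hG'.analyticSet.exists_isCompact_subset_measure_image_fst_le_add (μ.map f) hε
  obtain ⟨g, hg, hgL⟩ := hL.exists_measurable_mem
  have hA : MeasurableSet (Prod.fst '' L) := (hL.image continuous_fst).isClosed.measurableSet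
  refine ⟨f ⁻¹' (Prod.fst '' L), g ∘ f, hf hA, hg.comp hf, ?_, fun ω hω => hLG (hgL _ hω)⟩
  have hcover : f ⁻¹' (Prod.fst '' G') = univ :=
    eq_univ_of_forall fun ω => (hne ω).elim fun y hy => ⟨_, hy, rfl⟩
  rw [measure_compl (hf hA) (measure_ne_top _ _), tsub_le_iff_right]
  calc μ univ ≤ μ.map f (Prod.fst '' G') := hcover ▸ Measure.le_map_apply hf.aemeasurable _
    _ ≤ μ.map f (Prod.fst '' L) + ε := hνL
    _ = ε + μ (f ⁻¹' (Prod.fst '' L)) := by rw [Measure.map_apply hf hA, add_comm]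

theorem exists_measurable_ae_of_forall_measure_compl_le {Ω α : Type*} [MeasurableSpace Ω]
    [MeasurableSpace α] {μ : Measure Ω} {Q : Ω → α → Prop}
    (h : ∀ ε : ℝ≥0∞, ε ≠ 0 → ∃ (B : Set Ω) (x : Ω → α), MeasurableSet B ∧ Measurable x ∧
      μ Bᶜ ≤ ε ∧ ∀ ω ∈ B, Q ω (x ω)) :
    ∃ x : Ω → α, Measurable x ∧ ∀ᵐ ω ∂μ, Q ω (x ω) := by
  classical
  choose B x hB hx hμB hQ using fun n : ℕ => h (n : ℝ≥0∞)⁻¹ (by simp)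
  let T := ⋂ n, (B n)ᶜ
  have hT : μ T = 0 := le_antisymm (ge_of_tendsto' ENNReal.tendsto_inv_nat_nhds_zero
    fun n => (measure_mono (iInter_subset _ n)).trans (hμB n)) bot_le
  have hcover : ∀ ω, ∃ n, ω ∈ B n ∪ T := fun ω => by
    by_cases hω : ω ∈ T
    · exact ⟨0, .inr hω⟩
    · obtain ⟨n, hn⟩ : ∃ n, ω ∈ B n := by simpa [T] using hω
      exact ⟨n, .inl hn⟩
  refine ⟨fun ω => x (Nat.find (hcover ω)) ω,
    Measurable.find (p := fun n ω => ω ∈ B n ∪ T) hx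
      (fun n => (hB n).union (.iInter fun n => (hB n).compl)) hcover,
    measure_mono_null (fun ω hω => ?_) hT⟩
  rcases Nat.find_spec (hcover ω) with h | h
  exacts [absurd (hQ _ _ h) hω, h]

theorem MeasurableSet.exists_measurable_ae_mem {Ω Y : Type*} [MeasurableSpace Ω]
    [MeasurableSpace Y] [StandardBorelSpace Y] (μ : Measure Ω) [SFinite μ]
    {G : Set (Ω × Y)} (hG : MeasurableSet G) (hne : ∀ ω, ∃ y, (ω, y) ∈ G) :
    ∃ x : Ω → Y, Measurable x ∧ ∀ᵐ ω ∂μ, (ω, x ω) ∈ G := by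
  rcases isEmpty_or_nonempty Ω with _ | ⟨⟨ω₀⟩⟩
  · exact ⟨isEmptyElim, measurable_of_empty _, .of_forall isEmptyElim⟩
  have : Nonempty Y := ⟨(hne ω₀).choose⟩
  obtain ⟨e, he⟩ := exists_measurableEmbedding_real Y
  obtain ⟨r, hr, hre⟩ := he.exists_measurable_extend measurable_id fun _ => ‹Nonempty Y›
  have hGe : MeasurableSet (Prod.map id e '' G) :=
    (MeasurableEmbedding.id.prodMap he).measurableSet_image' hG
  obtain ⟨x, hx, hxG⟩ := exists_measurable_ae_of_forall_measure_compl_le (μ := μ.toFinite)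
    (Q := fun ω t => (ω, t) ∈ Prod.map id e '' G) fun ε hε =>
    hGe.exists_measurable_mem_on_measure_compl_le μ.toFinite
      (fun ω => (hne ω).elim fun y hy => ⟨e y, _, hy, rfl⟩) hε
  refine ⟨r ∘ x, hr.comp hx, ?_⟩
  rw [ae_toFinite] at hxG
  filter_upwards [hxG] with ω ⟨⟨ω', y⟩, hy, hxy⟩
  simp only [Prod.map_apply, id, Prod.mk.injEq] at hxy
  obtain ⟨rfl, hxy⟩ := hxy
  rwa [Function.comp_apply, ← hxy, show r (e y) = y from congrFun hre y]

theorem integrable_selections_nonempty_general {Ω Y : Type*} [MeasurableSpace Ω]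
    [NormedAddCommGroup Y] [CompleteSpace Y]
    [SecondCountableTopology Y] [MeasurableSpace Y] [BorelSpace Y]
    {μ : Measure Ω} [IsFiniteMeasure μ]
    (P : Ω → Set Y)
    (hne : ∀ ω, (P ω).Nonempty)
    (hgraph : MeasurableSet {p : Ω × Y | p.2 ∈ P p.1})
    (hbd : ∃ h : Ω → ℝ, Integrable h μ ∧ ∀ᵐ ω ∂μ, ∀ y ∈ P ω, ‖y‖ ≤ h ω) :
    ∃ x : Ω → Y, Integrable x μ ∧ ∀ᵐ ω ∂μ, x ω ∈ P ω := by
  obtain ⟨h, hh, hPh⟩ := hbd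
  obtain ⟨x, hx, hxP⟩ := hgraph.exists_measurable_ae_mem μ hne
  refine ⟨x, hh.mono' hx.aestronglyMeasurable ?_, hxP⟩
  filter_upwards [hxP, hPh] with ω hxω hω using hω _ hxω

theorem integrable_selections_nonempty {Ω Y : Type*} [MeasurableSpace Ω]
    [NormedAddCommGroup Y] [NormedSpace ℝ Y] [CompleteSpace Y]
    [SecondCountableTopology Y] [MeasurableSpace Y] [BorelSpace Y]
    {μ : Measure Ω} [IsFiniteMeasure μ] (hμ : μ.IsComplete)
    (P : Ω → Set Y)
    (hne : ∀ ω, (P ω).Nonempty)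
    (hgraph : MeasurableSet {p : Ω × Y | p.2 ∈ P p.1})
    (hbd : ∃ h : Ω → ℝ, Integrable h μ ∧ ∀ᵐ ω ∂μ, ∀ y ∈ P ω, ‖y‖ ≤ h ω) :
    ∃ x : Ω → Y, Integrable x μ ∧ ∀ᵐ ω ∂μ, x ω ∈ P ω :=
  integrable_selections_nonempty_general P hne hgraph hbd
end

section
/- Let Y be a normed space with dual Y′, A ⊆ Y convex, x ∈ A, and P : Y → 2^{Y′} a set-valued map with nonempty values that is monotone. Suppose that for every y ∈ A and every λ ∈ [0,1], with z_λ = λ y + (1−λ) x, we have sup{Re⟨u, x − z_λ⟩ : u ∈ P(z_λ)} ≤ 0. If moreover P is lower semicontinuous along each segment L = {z_λ : λ ∈ [0,1]} from the norm topology into the weak* topology, then sup{Re⟨u, x − y⟩ : u ∈ P(x)} ≤ 0 for all y ∈ A. -/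
/-!
Suppose `u ∈ P x` had `u (x - y) > 0`. The set `V` of functionals `w` with `w (x - y) > 0` is
weak*-open, so lower semicontinuity along the segment from `x` to `y` yields, for small `t > 0`,
some `w ∈ P z_t ∩ V`, where `z_t = t • y + (1 - t) • x`. But the hypothesis at `z_t` reads
`t * w (x - y) ≤ 0`, a contradiction.
-/

open Filter Topology

def LowerHemicontinuousAlong {ι X : Type*} [TopologicalSpace X] (S : ι → Set X) (l : Filter ι)
    (s : Set X) : Prop :=
  ∀ V : Set X, IsOpen V → (s ∩ V).Nonempty → ∀ᶠ i in l, (S i ∩ V).Nonempty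

theorem LowerHemicontinuousAlong.le_of_eventually_le {ι X : Type*} [TopologicalSpace X]
    {S : ι → Set X} {l : Filter ι} [l.NeBot] {s : Set X} (hS : LowerHemicontinuousAlong S l s)
    {f : X → ℝ} (hf : Continuous f) {c : ℝ} (hle : ∀ᶠ i in l, ∀ w ∈ S i, f w ≤ c) :
    ∀ u ∈ s, f u ≤ c := by
  intro u hu
  by_contra! hlt
  obtain ⟨i, ⟨w, hwS, hwV⟩, hi⟩ :=
    ((hS _ (isOpen_lt continuous_const hf) ⟨u, hu, hlt⟩).and hle).exists
  exact (hi w hwS).not_gt hwV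

theorem lowerHemicontinuousAlong_nhdsGT_zero {X : Type*} [TopologicalSpace X] {S : ℝ → Set X}
    (hS : ∀ V : Set X, IsOpen V → (S 0 ∩ V).Nonempty →
      ∃ ε > (0:ℝ), ∀ t ∈ Set.Icc (0:ℝ) 1, |t - 0| < ε → (S t ∩ V).Nonempty) :
    LowerHemicontinuousAlong S (𝓝[>] 0) (S 0) := by
  intro V hV hmeet
  obtain ⟨ε, hε, hε_meet⟩ := hS V hV hmeet
  filter_upwards [Ioo_mem_nhdsGT (lt_min hε one_pos)] with t ht
  refine hε_meet t ⟨ht.1.le, ht.2.le.trans (min_le_right _ _)⟩ ?_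
  rw [sub_zero, abs_of_pos ht.1]
  exact ht.2.trans_le (min_le_left _ _)

theorem minty_variational_inequality_general {Y : Type*} [NormedAddCommGroup Y] [NormedSpace ℝ Y]
    (A : Set Y) (x : Y)
    (P : Y → Set (WeakDual ℝ Y))
    (hineq : ∀ y ∈ A, ∀ lam ∈ Set.Icc (0:ℝ) 1,
      ∀ u ∈ P (lam • y + (1 - lam) • x), u (x - (lam • y + (1 - lam) • x)) ≤ 0)
    (hlsc : ∀ y ∈ A, ∀ lam ∈ Set.Icc (0:ℝ) 1, ∀ V : Set (WeakDual ℝ Y), IsOpen V →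
      (P (lam • y + (1 - lam) • x) ∩ V).Nonempty →
      ∃ ε > (0:ℝ), ∀ t ∈ Set.Icc (0:ℝ) 1, |t - lam| < ε →
        (P (t • y + (1 - t) • x) ∩ V).Nonempty) :
    ∀ y ∈ A, ∀ u ∈ P x, u (x - y) ≤ 0 := by
  intro y hy
  set S : ℝ → Set (WeakDual ℝ Y) := fun t => P (t • y + (1 - t) • x)
  have hS0 : S 0 = P x := by simp [S]
  have hS : LowerHemicontinuousAlong S (𝓝[>] 0) (S 0) :=
    lowerHemicontinuousAlong_nhdsGT_zero (hlsc y hy 0 ⟨le_rfl, zero_le_one⟩)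
  have hle : ∀ᶠ t in 𝓝[>] (0:ℝ), ∀ w ∈ S t, w (x - y) ≤ 0 := by
    filter_upwards [Ioo_mem_nhdsGT one_pos] with t ht w hw
    have hseg : x - (t • y + (1 - t) • x) = t • (x - y) := by module
    have := hineq y hy t ⟨ht.1.le, ht.2.le⟩ w hw
    rw [hseg, map_smul, smul_eq_mul] at this
    exact nonpos_of_mul_nonpos_right this ht.1
  rw [← hS0]
  exact hS.le_of_eventually_le (WeakDual.eval_continuous (x - y)) hle

/-- Minty-type argument: monotonicity plus lower semicontinuity along segments
into the weak* topology yields the variational inequality at `x`. -/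
theorem minty_variational_inequality {Y : Type*} [NormedAddCommGroup Y] [NormedSpace ℝ Y]
    (A : Set Y) (hA : Convex ℝ A) (x : Y) (hx : x ∈ A)
    (P : Y → Set (WeakDual ℝ Y))
    (hne : ∀ w : Y, (P w).Nonempty)
    (hmono : ∀ a b : Y, ∀ u ∈ P b, ∀ v ∈ P a, v (b - a) ≤ u (b - a))
    (hineq : ∀ y ∈ A, ∀ lam ∈ Set.Icc (0:ℝ) 1,
      ∀ u ∈ P (lam • y + (1 - lam) • x), u (x - (lam • y + (1 - lam) • x)) ≤ 0)
    (hlsc : ∀ y ∈ A, ∀ lam ∈ Set.Icc (0:ℝ) 1, ∀ V : Set (WeakDual ℝ Y), IsOpen V →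
      (P (lam • y + (1 - lam) • x) ∩ V).Nonempty →
      ∃ ε > (0:ℝ), ∀ t ∈ Set.Icc (0:ℝ) 1, |t - lam| < ε →
        (P (t • y + (1 - t) • x) ∩ V).Nonempty) :
    ∀ y ∈ A, ∀ u ∈ P x, u (x - y) ≤ 0 :=
  minty_variational_inequality_general A x P hineq hlsc
end

section
/- Let (Ω, F, μ) be a complete finite measure space, Y a complete separable metric space, and T : Ω → 2^Y a nonempty-valued set-valued map with measurable graph G_T ∈ F ⊗ B(Y). Then there exists a measurable function f : Ω → Y such that f(ω) ∈ T(ω) for μ-almost every ω. -/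
/-!
The graph is generated by countably many measurable rectangles, so it is the preimage of a Borel
set `B ⊆ (ℕ → ℕ) × Y` under `φ × id` for some measurable `φ : Ω → ℕ → ℕ`. Being Borel in a Polish
space, `B` is the range of a continuous `F : (ℕ → ℕ) → (ℕ → ℕ) × Y`, and `ω ↦ (F z).2`, where `z` is
the lexicographically least sequence with `(F z).1 = φ ω`, selects from `T` at every `ω`.
Its measurability reduces to that of the sets `φ ⁻¹' ((Prod.fst ∘ F) '' C)` with `C` closed. These
are preimages of analytic sets, which are null measurable for every finite measure: a continuous
image of `ℕ → ℕ` is approximated from inside by images of compact boxes `∏ i, [0, kᵢ]`, the bounds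
`kᵢ` being chosen one coordinate at a time. Completeness of `μ` turns null measurable into
measurable.
-/

open MeasureTheory Set Filter
open scoped ENNReal

theorem MeasurableSet.exists_measurable_eq_prodMap_preimage {α β : Type*} [MeasurableSpace α]
    [MeasurableSpace β] {s : Set (α × β)} (hs : MeasurableSet s) :
    ∃ (φ : α → ℕ → ℕ) (B : Set ((ℕ → ℕ) × β)), Measurable φ ∧ MeasurableSet B ∧
      s = Prod.map φ id ⁻¹' B := by
  rw [← generateFrom_prod] at hs
  induction s, hs using MeasurableSpace.generateFrom_induction with
  | hC _ hst =>
    obtain ⟨s, hs, t, ht, rfl⟩ := hst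
    refine ⟨fun a _ => s.indicator 1 a, ((fun x : ℕ → ℕ => x 0) ⁻¹' {1}) ×ˢ t,
      measurable_pi_lambda _ fun _ => measurable_const.indicator hs,
      (measurable_pi_apply 0 (measurableSet_singleton 1)).prod ht, ?_⟩
    ext ⟨a, b⟩
    by_cases ha : a ∈ s <;> simp [ha]
  | empty => exact ⟨0, ∅, measurable_const, .empty, rfl⟩
  | compl _ _ ih =>
    obtain ⟨φ, B, hφ, hB, rfl⟩ := ih
    exact ⟨φ, Bᶜ, hφ, hB.compl, rfl⟩
  | iUnion _ _ ih =>
    choose φ B hφ hB hsB using ih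
    -- the sequences `φ n a` are interleaved into one through `Nat.pair`
    refine ⟨fun a k => φ k.unpair.1 a k.unpair.2,
      ⋃ n, Prod.map (fun x j => x (Nat.pair n j)) id ⁻¹' B n,
      measurable_pi_lambda _ fun k => measurable_pi_apply _ |>.comp (hφ _), ?_, ?_⟩
    · exact .iUnion fun n => (measurable_pi_lambda _ fun j => measurable_pi_apply _).prodMap
        measurable_id (hB n)
    · simp_rw [hsB]
      ext ⟨a, b⟩
      simp

theorem Monotone.exists_measure_iUnion_le_add {α : Type*} [MeasurableSpace α]
    {μ : Measure α} {s : ℕ → Set α} (hs : Monotone s) (hμs : μ (⋃ n, s n) ≠ ∞) {δ : ℝ≥0∞}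
    (hδ : δ ≠ 0) : ∃ n, μ (⋃ n, s n) ≤ μ (s n) + δ := by
  rw [hs.measure_iUnion] at hμs ⊢
  rcases eq_or_ne (⨆ n, μ (s n)) 0 with h0 | h0
  · exact ⟨0, by simp [h0]⟩
  obtain ⟨n, hn⟩ := lt_iSup_iff.1 (ENNReal.sub_lt_self hμs h0 hδ)
  exact ⟨n, tsub_le_iff_right.1 hn.le⟩

namespace PiNat

section LexMin

noncomputable def lexMinAux (S : Set (ℕ → ℕ)) : ℕ → Set (ℕ → ℕ)
  | 0 => S
  | n + 1 => lexMinAux S n ∩ {z | z n = sInf {m | (lexMinAux S n ∩ {z | z n = m}).Nonempty}}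

/-- The lexicographically least element of `S`; junk unless `S` is closed and nonempty. -/
noncomputable def lexMin (S : Set (ℕ → ℕ)) (n : ℕ) : ℕ :=
  sInf {m | (lexMinAux S n ∩ {z | z n = m}).Nonempty}

variable {S : Set (ℕ → ℕ)}

theorem lexMinAux_succ (n : ℕ) : lexMinAux S (n + 1) = lexMinAux S n ∩ {z | z n = lexMin S n} :=
  rfl

theorem lexMinAux_eq (n : ℕ) : lexMinAux S n = S ∩ cylinder (lexMin S) n := by
  induction n with
  | zero => simp [lexMinAux]
  | succ n ih =>
    ext z
    simp only [lexMinAux_succ, ih, mem_inter_iff, mem_cylinder_iff, Nat.forall_lt_succ_right,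
      mem_ofPred_eq, and_assoc]

theorem lexMinAux_nonempty (hS : S.Nonempty) (n : ℕ) : (lexMinAux S n).Nonempty := by
  induction n with
  | zero => exact hS
  | succ n ih =>
    obtain ⟨z, hz⟩ := ih
    exact Nat.sInf_mem (s := {m | (lexMinAux S n ∩ {z | z n = m}).Nonempty}) ⟨z n, z, hz, rfl⟩

theorem lexMin_mem (hS : IsClosed S) (hne : S.Nonempty) : lexMin S ∈ S := by
  choose z hz using lexMinAux_nonempty hne
  simp only [lexMinAux_eq, mem_inter_iff, mem_cylinder_iff] at hz
  refine hS.mem_of_tendsto (tendsto_pi_nhds.2 fun i => ?_)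
    (Eventually.of_forall (f := atTop) fun n => (hz n).1)
  exact tendsto_atTop_of_eventually_const (i₀ := i + 1) fun n hn => (hz n).2 i hn

theorem lexMin_apply_eq_iff (hS : S.Nonempty) {v : ℕ → ℕ} {n : ℕ} (hv : lexMin S ∈ cylinder v n)
    (m : ℕ) :
    lexMin S n = m ↔ (S ∩ (cylinder v n ∩ {z | z n = m})).Nonempty ∧
      ∀ m' < m, ¬(S ∩ (cylinder v n ∩ {z | z n = m'})).Nonempty := by
  obtain ⟨z, hz⟩ := lexMinAux_nonempty hS n
  have hne : {m | (lexMinAux S n ∩ {z | z n = m}).Nonempty}.Nonempty := ⟨z n, z, hz, rfl⟩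
  rw [lexMin, csInf_eq_iff hne]
  simp only [lexMinAux_eq, mem_cylinder_iff_eq.1 hv, inter_assoc, mem_ofPred_eq, ← not_le,
    not_imp_not]

theorem isClosed_cylinder {E : ℕ → Type*} [∀ n, TopologicalSpace (E n)]
    [∀ n, DiscreteTopology (E n)] (x : ∀ n, E n) (n : ℕ) : IsClosed (cylinder x n) := by
  rw [cylinder_eq_pi]
  exact isClosed_set_pi fun i _ => isClosed_discrete _

theorem measurable_of_measurableSet_preimage_cylinder {X : Type*} [MeasurableSpace X]
    {f : X → ℕ → ℕ} (hf : ∀ v n, MeasurableSet (f ⁻¹' cylinder v n)) : Measurable f := by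
  refine measurable_of_isOpen fun U hU => ?_
  obtain ⟨T, hTc, hT, hTU⟩ := TopologicalSpace.isOpen_sUnion_countable
    {c | c ∈ {c | ∃ v n, c = cylinder v n} ∧ c ⊆ U} fun c hc => by
      obtain ⟨v, n, rfl⟩ := hc.1
      exact isOpen_cylinder _ v n
  rw [(isTopologicalBasis_cylinders _).open_eq_sUnion' hU, ← hTU, preimage_sUnion]
  refine .biUnion hTc fun c hc => ?_
  obtain ⟨v, n, rfl⟩ := (hT hc).1
  exact hf v n

theorem measurable_lexMin {X : Type*} [MeasurableSpace X] {F : X → Set (ℕ → ℕ)}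
    (hne : ∀ x, (F x).Nonempty)
    (hF : ∀ C, IsClosed C → MeasurableSet {x | (F x ∩ C).Nonempty}) :
    Measurable fun x => lexMin (F x) := by
  have hC : ∀ v n m, IsClosed (cylinder v n ∩ {z : ℕ → ℕ | z n = m}) := fun v n m =>
    (isClosed_cylinder v n).inter (isClosed_eq (continuous_apply n) continuous_const)
  refine measurable_of_measurableSet_preimage_cylinder fun v n => ?_
  induction n with
  | zero => simp
  | succ n ih =>
    have : (fun x => lexMin (F x)) ⁻¹' cylinder v (n + 1) =
        (fun x => lexMin (F x)) ⁻¹' cylinder v n ∩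
          ({x | (F x ∩ (cylinder v n ∩ {z | z n = v n})).Nonempty} ∩
            ⋂ m < v n, {x | (F x ∩ (cylinder v n ∩ {z | z n = m})).Nonempty}ᶜ) := by
      ext x
      simp only [mem_preimage, mem_inter_iff, mem_iInter, mem_compl_iff, mem_ofPred_eq]
      rw [mem_cylinder_iff, Nat.forall_lt_succ_right, ← mem_cylinder_iff]
      exact and_congr_right fun hx => lexMin_apply_eq_iff (hne x) hx (v n)
    rw [this]
    exact ih.inter ((hF _ (hC ..)).inter (.iInter fun m => .iInter fun _ => (hF _ (hC ..)).compl))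

end LexMin

def boundedPrefix (k : ℕ → ℕ) (n : ℕ) : Set (ℕ → ℕ) := {z | ∀ i < n, z i ≤ k i}

theorem exists_boundedPrefix_subset {k : ℕ → ℕ} {U : Set (ℕ → ℕ)} (hU : IsOpen U)
    (hkU : univ.pi (fun i => Iic (k i)) ⊆ U) : ∃ n, boundedPrefix k n ⊆ U := by
  set K : Set (ℕ → ℕ) := univ.pi fun i => Iic (k i)
  have hK : IsCompact K := isCompact_univ_pi fun i => (finite_Iic (k i)).isCompact
  have hcyl : ∀ z ∈ K, ∃ n, cylinder z n ⊆ U := fun z hz => by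
    obtain ⟨_, ⟨v, n, rfl⟩, hzc, hcU⟩ :=
      (isTopologicalBasis_cylinders _).exists_subset_of_mem_open (hkU hz) hU
    exact ⟨n, mem_cylinder_iff_eq.1 hzc ▸ hcU⟩
  choose N hN using hcyl
  obtain ⟨t, ht⟩ := hK.elim_nhds_subcover' (fun z hz => cylinder z (N z hz))
    fun z hz => (isOpen_cylinder _ z _).mem_nhds (self_mem_cylinder z _)
  set M := t.sup fun z => N z z.2
  refine ⟨M, fun y hy => ?_⟩
  -- `y` agrees up to `M` with its truncation, which lies in `K`
  have hy' : (fun i => if i < M then y i else 0) ∈ K := fun i _ => by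
    dsimp only
    split_ifs with hi
    exacts [hy i hi, Nat.zero_le _]
  obtain ⟨z, hzt, hyz⟩ : ∃ z : K, z ∈ t ∧
      (fun i => if i < M then y i else 0) ∈ cylinder z.1 (N z.1 z.2) := by
    simpa only [mem_iUnion, exists_prop] using ht hy'
  refine hN z z.2 (mem_cylinder_iff.2 fun i hi => ?_)
  have hiM : i < M := hi.trans_le (Finset.le_sup (f := fun z : K => N z z.2) hzt)
  simpa [hiM] using mem_cylinder_iff.1 hyz i hi

theorem iInter_closure_image_boundedPrefix_subset {X : Type*} [TopologicalSpace X] [T2Space X]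
    {g : (ℕ → ℕ) → X} (hg : Continuous g) (k : ℕ → ℕ) :
    ⋂ n, closure (g '' boundedPrefix k n) ⊆ g '' univ.pi fun i => Iic (k i) := by
  intro x hx
  by_contra hxK
  have hK : IsCompact (g '' univ.pi fun i => Iic (k i)) :=
    (isCompact_univ_pi fun i => (finite_Iic (k i)).isCompact).image hg
  obtain ⟨V, W, hV, hW, hxV, hKW, hVW⟩ :=
    SeparatedNhds.of_isCompact_isCompact isCompact_singleton hK (disjoint_singleton_left.2 hxK)
  obtain ⟨n, hn⟩ := exists_boundedPrefix_subset (hW.preimage hg) (image_subset_iff.1 hKW)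
  have : closure (g '' boundedPrefix k n) ⊆ Vᶜ :=
    closure_minimal ((image_subset_iff.2 hn).trans hVW.subset_compl_left) hV.isClosed_compl
  exact this (mem_iInter.1 hx n) (hxV rfl)

variable {X : Type*} [MeasurableSpace X] {ν : Measure X} [IsFiniteMeasure ν]

theorem exists_measure_image_le_image_inter_add {g : (ℕ → ℕ) → X} (s : Set (ℕ → ℕ)) (n : ℕ)
    {δ : ℝ≥0∞} (hδ : δ ≠ 0) : ∃ m, ν (g '' s) ≤ ν (g '' (s ∩ {z | z n ≤ m})) + δ := by
  have hs : ⋃ m, g '' (s ∩ {z | z n ≤ m}) = g '' s := by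
    rw [← image_iUnion, ← inter_iUnion, iUnion_eq_univ_iff.2 fun z => ⟨z n, le_refl (z n)⟩,
      inter_univ]
  rw [← hs]
  have hmono : Monotone fun m => g '' (s ∩ {z | z n ≤ m}) :=
    fun m m' hm => image_mono (inter_subset_inter_right _ fun z (hz : z n ≤ m) => hz.trans hm)
  exact hmono.exists_measure_iUnion_le_add (measure_ne_top _ _) hδ

theorem exists_isCompact_measure_range_le_add [TopologicalSpace X] [T2Space X]
    [OpensMeasurableSpace X] {g : (ℕ → ℕ) → X} (hg : Continuous g) {ε : ℝ≥0∞} (hε : ε ≠ 0) :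
    ∃ K, IsCompact K ∧ ν (range g) ≤ ν (g '' K) + ε := by
  obtain ⟨δ, hδ, hδε⟩ := ENNReal.exists_pos_sum_of_countable hε ℕ
  choose m hm using fun s n => exists_measure_image_le_image_inter_add (ν := ν) (g := g) s n
    (δ := δ n) (ENNReal.coe_ne_zero.2 (hδ n).ne')
  let S : ℕ → Set (ℕ → ℕ) := fun n => Nat.rec univ (fun n Sn => Sn ∩ {z | z n ≤ m Sn n}) n
  set k : ℕ → ℕ := fun n => m (S n) n
  have hS : ∀ n, S n = boundedPrefix k n := by
    intro n
    induction n with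
    | zero => simp [S, boundedPrefix]
    | succ n ih =>
      rw [show S (n + 1) = S n ∩ {z | z n ≤ k n} from rfl, ih]
      ext z
      simp only [boundedPrefix, mem_inter_iff, mem_ofPred_eq, Nat.forall_lt_succ_right]
  have hν : ∀ n, ν (range g) ≤ ν (g '' S n) + ∑ i ∈ Finset.range n, (δ i : ℝ≥0∞) := by
    intro n
    induction n with
    | zero => simp [S]
    | succ n ih =>
      calc ν (range g) ≤ ν (g '' S n) + ∑ i ∈ Finset.range n, (δ i : ℝ≥0∞) := ih
        _ ≤ ν (g '' S (n + 1)) + δ n + ∑ i ∈ Finset.range n, (δ i : ℝ≥0∞) := by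
          gcongr
          exact hm _ _
        _ = ν (g '' S (n + 1)) + ∑ i ∈ Finset.range (n + 1), (δ i : ℝ≥0∞) := by
          rw [Finset.sum_range_succ, add_assoc, add_comm (δ n : ℝ≥0∞)]
  have hanti : Antitone fun n => closure (g '' boundedPrefix k n) :=
    fun a b hab => closure_mono (image_mono fun z hz i hi => hz i (hi.trans_le hab))
  refine ⟨univ.pi fun i => Iic (k i), isCompact_univ_pi fun i => (finite_Iic _).isCompact, ?_⟩
  calc ν (range g) ≤ (⨅ n, ν (closure (g '' boundedPrefix k n))) + ε := by
        rw [ENNReal.iInf_add]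
        refine le_iInf fun n => (hν n).trans (add_le_add ?_ ?_)
        · exact hS n ▸ measure_mono subset_closure
        · exact (ENNReal.sum_le_tsum _).trans hδε.le
    _ = ν (⋂ n, closure (g '' boundedPrefix k n)) + ε := by
        rw [hanti.measure_iInter (fun n => isClosed_closure.nullMeasurableSet)
          ⟨0, measure_ne_top _ _⟩]
    _ ≤ ν (g '' univ.pi fun i => Iic (k i)) + ε := by
        gcongr
        exact iInter_closure_image_boundedPrefix_subset hg k

end PiNat

open PiNat in
theorem MeasureTheory.AnalyticSet.nullMeasurableSet {X : Type*} [TopologicalSpace X] [T2Space X]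
    [MeasurableSpace X] [OpensMeasurableSpace X] {s : Set X} (hs : AnalyticSet s) (ν : Measure X)
    [IsFiniteMeasure ν] : NullMeasurableSet s ν := by
  rw [AnalyticSet] at hs
  rcases hs with rfl | ⟨g, hg, rfl⟩
  · exact .empty
  choose K hK hgK using fun n : ℕ =>
    exists_isCompact_measure_range_le_add (ν := ν) hg (ε := (n : ℝ≥0∞)⁻¹) (by simp)
  have hKm : MeasurableSet (⋃ n, g '' K n) :=
    .iUnion fun n => ((hK n).image hg).isClosed.measurableSet
  have hKg : ⋃ n, g '' K n ⊆ range g := iUnion_subset fun n => image_subset_range g (K n)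
  refine hKm.nullMeasurableSet.congr (ae_eq_of_subset_of_measure_ge hKg ?_
    hKm.nullMeasurableSet (measure_ne_top _ _))
  refine ENNReal.le_of_forall_pos_le_add fun ε hε _ => ?_
  obtain ⟨n, hn⟩ := ENNReal.exists_inv_nat_lt (ENNReal.coe_ne_zero.2 hε.ne')
  exact (hgK n).trans (add_le_add (measure_mono (subset_iUnion (fun n => g '' K n) n)) hn.le)

open PiNat in
theorem MeasureTheory.AnalyticSet.exists_measurable_forall_mem {Ω X Y : Type*} [MeasurableSpace Ω]
    [TopologicalSpace X] [T2Space X] [MeasurableSpace X] [OpensMeasurableSpace X]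
    [TopologicalSpace Y] [MeasurableSpace Y] [BorelSpace Y]
    {A : Set (X × Y)} (hA : AnalyticSet A) (μ : Measure Ω) [IsFiniteMeasure μ] [μ.IsComplete]
    {φ : Ω → X} (hφ : Measurable φ) (hφA : ∀ ω, ∃ y, (φ ω, y) ∈ A) :
    ∃ f : Ω → Y, Measurable f ∧ ∀ ω, (φ ω, f ω) ∈ A := by
  rw [AnalyticSet] at hA
  rcases hA with rfl | ⟨F, hF, rfl⟩
  · have : IsEmpty Ω := ⟨fun ω => (hφA ω).elim fun _ => id⟩
    exact ⟨isEmptyElim, Subsingleton.measurable, isEmptyElim⟩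
  have hg : Continuous fun z => (F z).1 := continuous_fst.comp hF
  have hφg : ∀ ω, ((fun z => (F z).1) ⁻¹' {φ ω}).Nonempty := fun ω => by
    obtain ⟨y, z, hz⟩ := hφA ω
    exact ⟨z, congrArg Prod.fst hz⟩
  refine ⟨fun ω => (F (lexMin ((fun z => (F z).1) ⁻¹' {φ ω}))).2, ?_, fun ω => ?_⟩
  · refine (continuous_snd.comp hF).measurable.comp (measurable_lexMin hφg fun C hC => ?_)
    have hC' : {ω | ((fun z => (F z).1) ⁻¹' {φ ω} ∩ C).Nonempty} =
        φ ⁻¹' ((fun z => (F z).1) '' C) := by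
      ext ω
      exact ⟨fun ⟨z, hz, hzC⟩ => ⟨z, hzC, hz⟩, fun ⟨z, hzC, hz⟩ => ⟨z, hz, hzC⟩⟩
    rw [hC']
    exact (((hC.analyticSet.image_of_continuous hg).nullMeasurableSet _).preimage
      (hφ.quasiMeasurePreserving μ)).measurable_of_complete
  · exact ⟨_, Prod.ext (lexMin_mem (isClosed_singleton.preimage hg) (hφg ω)) rfl⟩

/-- Aumann measurable selection theorem. -/
theorem aumann_measurable_selection {Ω Y : Type*} [MeasurableSpace Ω]
    [MetricSpace Y] [CompleteSpace Y] [SecondCountableTopology Y]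
    [MeasurableSpace Y] [BorelSpace Y]
    {μ : Measure Ω} [IsFiniteMeasure μ] (hμ : μ.IsComplete)
    (T : Ω → Set Y) (hne : ∀ ω, (T ω).Nonempty)
    (hgraph : MeasurableSet {p : Ω × Y | p.2 ∈ T p.1}) :
    ∃ f : Ω → Y, Measurable f ∧ ∀ᵐ ω ∂μ, f ω ∈ T ω := by
  obtain ⟨φ, B, hφ, hB, hTB⟩ := hgraph.exists_measurable_eq_prodMap_preimage
  have hT : ∀ ω y, y ∈ T ω ↔ (φ ω, y) ∈ B := fun ω y => Set.ext_iff.1 hTB (ω, y)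
  have := hμ
  obtain ⟨f, hf, hfB⟩ := hB.analyticSet.exists_measurable_forall_mem μ hφ
    fun ω => (hne ω).imp fun y => (hT ω y).1
  exact ⟨f, hf, ae_of_all μ fun ω => (hT ω (f ω)).2 (hfB ω)⟩
end

section
/- Let (Ω, F, μ) be a complete finite measure space and Y a complete separable metric space. If H ∈ F ⊗ B(Y), then the projection Proj_Ω(H) = {ω ∈ Ω : ∃ y, (ω, y) ∈ H} belongs to F. -/
/-!
A set `H ∈ F ⊗ B(Y)` only involves countably many sets of `F`, so `H = (g × id)⁻¹ H'` for a
measurable `g : Ω → 2^ℕ` and a Borel set `H' ⊆ 2^ℕ × Y`. Its projection is then `g⁻¹ (π H')`,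
where `π H'` is analytic in the Polish space `2^ℕ`. An analytic set `f(ℕ^ℕ)` is null measurable
for every finite measure: choosing bounds `k 0, k 1, …` one at a time by continuity from below of
the outer measure, the compact set `f {σ | σ ≤ k}` exhausts it up to `ε`. Applied to `g_* μ`, this
makes the projection `μ`-null measurable, hence measurable by completeness.
-/

open Set Filter Topology
open scoped ENNReal

namespace MeasureTheory

lemma _root_.Monotone.exists_measure_iUnion_le_add_s14 {α : Type*} [MeasurableSpace α]
    {μ : Measure α} {s : ℕ → Set α} (hs : Monotone s) (hfin : μ (⋃ j, s j) ≠ ∞) {δ : ℝ≥0∞}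
    (hδ : δ ≠ 0) : ∃ j, μ (⋃ j, s j) ≤ μ (s j) + δ := by
  by_contra! h
  have : μ (⋃ j, s j) + δ ≤ μ (⋃ j, s j) := by
    calc _ = ⨆ j, (μ (s j) + δ) := by rw [hs.measure_iUnion, ENNReal.iSup_add]
      _ ≤ _ := iSup_le fun j => (h j).le
  exact (ENNReal.lt_add_right hfin hδ).not_ge this

lemma nullMeasurableSet_of_forall_exists_subset_measure_le_add {α : Type*} [MeasurableSpace α]
    {μ : Measure α} {s : Set α} (hs : μ s ≠ ∞)
    (h : ∀ ε ≠ 0, ∃ t ⊆ s, MeasurableSet t ∧ μ s ≤ μ t + ε) : NullMeasurableSet s μ := by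
  choose t hts ht hst using fun n : ℕ => h (n : ℝ≥0∞)⁻¹ (by simp)
  have hle : μ s ≤ μ (⋃ n, t n) := by
    refine ENNReal.le_of_forall_pos_le_add fun ε hε _ => ?_
    obtain ⟨n, hn⟩ := ENNReal.exists_inv_nat_lt (a := ε) (by simpa using hε.ne')
    exact (hst n).trans (add_le_add (measure_mono (subset_iUnion t n)) hn.le)
  have hmeas : MeasurableSet (⋃ n, t n) := .iUnion ht
  exact hmeas.nullMeasurableSet.congr
    (ae_eq_of_subset_of_measure_ge (iUnion_subset hts) hle hmeas.nullMeasurableSet hs)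

section AnalyticSet

variable {X : Type*}

lemma exists_measure_range_le_image_pi_Iio_add [MeasurableSpace X] {μ : Measure X}
    [IsFiniteMeasure μ] (f : (ℕ → ℕ) → X) {ε : ℝ≥0∞} (hε : ε ≠ 0) :
    ∃ k : ℕ → ℕ, ∀ n, μ (range f) ≤ μ (f '' (Iio n).pi fun i => Iic (k i)) + ε := by
  obtain ⟨δ, hδ, hδε⟩ := ENNReal.exists_pos_sum_of_countable hε ℕ
  have hstep : ∀ (s : Set (ℕ → ℕ)) (n : ℕ),
      ∃ j, μ (f '' s) ≤ μ (f '' (s ∩ {σ | σ n ≤ j})) + δ n := fun s n => by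
    have hmono : Monotone fun j => f '' (s ∩ {σ | σ n ≤ j}) := fun j j' hj =>
      image_mono (inter_subset_inter_right _ fun σ hσ => le_trans hσ hj)
    have hunion : ⋃ j, f '' (s ∩ {σ | σ n ≤ j}) = f '' s := by
      rw [← image_iUnion, ← inter_iUnion,
        iUnion_eq_univ_iff.2 fun σ => ⟨σ n, mem_ofPred.2 le_rfl⟩, inter_univ]
    simpa only [hunion] using
      hmono.exists_measure_iUnion_le_add_s14 (hunion ▸ measure_ne_top μ _) (by simpa using (hδ n).ne')
  choose c hc using hstep
  -- `s n` is the set of sequences respecting the first `n` bounds chosen so far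
  let s : ℕ → Set (ℕ → ℕ) := fun n => Nat.rec univ (fun n t => t ∩ {σ | σ n ≤ c t n}) n
  have hs : ∀ n, s n = (Iio n).pi fun i => Iic (c (s i) i) := by
    intro n
    induction n with
    | zero => simp [s]
    | succ n ih =>
      ext σ
      change σ ∈ s n ∧ σ n ≤ c (s n) n ↔ _
      nth_rw 1 [ih]
      simp only [Set.mem_pi, mem_Iio, mem_Iic, Nat.forall_lt_succ_right]
  have hbound : ∀ n, μ (range f) ≤ μ (f '' s n) + ∑ i ∈ Finset.range n, (δ i : ℝ≥0∞) := by
    intro n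
    induction n with
    | zero => simp [s]
    | succ n ih =>
      calc μ (range f) ≤ μ (f '' s n) + ∑ i ∈ Finset.range n, (δ i : ℝ≥0∞) := ih
        _ ≤ μ (f '' s (n + 1)) + δ n + ∑ i ∈ Finset.range n, (δ i : ℝ≥0∞) :=
          add_le_add_left (hc _ _) _
        _ = μ (f '' s (n + 1)) + ∑ i ∈ Finset.range (n + 1), (δ i : ℝ≥0∞) := by
          rw [Finset.sum_range_succ]; ring
  refine ⟨fun n => c (s n) n, fun n => ?_⟩
  rw [← hs]
  exact (hbound n).trans (add_le_add_right ((ENNReal.sum_le_tsum _).trans hδε.le) _)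

variable [TopologicalSpace X] [T2Space X] [FirstCountableTopology X]

lemma mem_image_univ_pi_of_forall_mem_closure {f : (ℕ → ℕ) → X} (hf : Continuous f)
    (k : ℕ → ℕ) {x : X} (hx : ∀ n, x ∈ closure (f '' (Iio n).pi fun i => Iic (k i))) :
    x ∈ f '' univ.pi fun i => Iic (k i) := by
  obtain ⟨U, hU⟩ := (𝓝 x).exists_antitone_basis
  have hσ : ∀ n, ∃ σ ∈ (Iio n).pi fun i => Iic (k i), f σ ∈ U n := fun n => by
    obtain ⟨_, hU', σ, hσ, rfl⟩ := mem_closure_iff_nhds.1 (hx n) (U n) (hU.mem n)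
    exact ⟨σ, hσ, hU'⟩
  choose σ hσk hσU using hσ
  -- coordinate `i` of `σ n` is at most `k i` once `n > i`, so the sequence lies in a compact box
  let M : ℕ → ℕ := fun i => max (k i) ((Finset.range (i + 1)).sup fun m => σ m i)
  have hbox : ∀ n, σ n ∈ univ.pi fun i => Iic (M i) := fun n i _ => by
    rcases lt_or_ge i n with hin | hni
    · exact (mem_Iic.1 (hσk n i hin)).trans (le_max_left _ _)
    · exact (Finset.le_sup (f := fun m => σ m i) (Finset.mem_range.2 (by omega))).trans
        (le_max_right _ _)
  obtain ⟨a, -, φ, hφ, hlim⟩ :=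
    (isCompact_univ_pi fun i => (finite_Iic (M i)).isCompact).tendsto_subseq hbox
  refine ⟨a, fun i _ => ?_, tendsto_nhds_unique ((hf.tendsto a).comp hlim)
    (hU.tendsto hσU |>.comp hφ.tendsto_atTop)⟩
  have hclosed : IsClosed ((Iio (i + 1)).pi fun j => Iic (k j)) :=
    isClosed_set_pi fun j _ => isClosed_Iic
  refine hclosed.mem_of_tendsto hlim (eventually_atTop.2 ⟨i + 1, fun n hn j hj => ?_⟩) i
    (by simp)
  exact hσk (φ n) j (lt_of_lt_of_le hj (hn.trans (hφ.id_le n)))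

variable [MeasurableSpace X] [OpensMeasurableSpace X] {μ : Measure X} [IsFiniteMeasure μ]

lemma exists_isCompact_subset_range_measure_le_add {f : (ℕ → ℕ) → X} (hf : Continuous f)
    {ε : ℝ≥0∞} (hε : ε ≠ 0) : ∃ K ⊆ range f, IsCompact K ∧ μ (range f) ≤ μ K + ε := by
  obtain ⟨k, hk⟩ := exists_measure_range_le_image_pi_Iio_add (μ := μ) f hε
  let B : ℕ → Set (ℕ → ℕ) := fun n => (Iio n).pi fun i => Iic (k i)
  refine ⟨f '' univ.pi fun i => Iic (k i), image_subset_range _ _,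
    (isCompact_univ_pi fun i => (finite_Iic _).isCompact).image hf, ?_⟩
  have hanti : Antitone fun n => closure (f '' B n) := fun m n hmn =>
    closure_mono (image_mono fun σ hσ i hi => hσ i (lt_of_lt_of_le hi hmn))
  calc μ (range f) ≤ (⨅ n, μ (closure (f '' B n))) + ε := by
        rw [ENNReal.iInf_add]
        exact le_iInf fun n => (hk n).trans (add_le_add_left (measure_mono subset_closure) _)
    _ = μ (⋂ n, closure (f '' B n)) + ε := by
        rw [hanti.measure_iInter (fun n => isClosed_closure.measurableSet.nullMeasurableSet)
          ⟨0, measure_ne_top _ _⟩]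
    _ ≤ μ (f '' univ.pi fun i => Iic (k i)) + ε := add_le_add_left (measure_mono fun x hx =>
        mem_image_univ_pi_of_forall_mem_closure hf k (mem_iInter.1 hx)) _

theorem AnalyticSet.nullMeasurableSet_s14 {s : Set X} (hs : AnalyticSet s) :
    NullMeasurableSet s μ := by
  rw [AnalyticSet] at hs
  rcases hs with rfl | ⟨f, hf, rfl⟩
  · exact nullMeasurableSet_empty
  refine nullMeasurableSet_of_forall_exists_subset_measure_le_add (measure_ne_top μ _)
    fun ε hε => ?_
  obtain ⟨K, hKf, hK, hle⟩ := exists_isCompact_subset_range_measure_le_add (μ := μ) hf hε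
  exact ⟨K, hKf, hK.measurableSet, hle⟩

end AnalyticSet

section CantorPullback

variable {Ω Y : Type*} [MeasurableSpace Ω] [MeasurableSpace Y]

def IsCantorPullback (H : Set (Ω × Y)) : Prop :=
  ∃ g : Ω → ℕ → Bool, Measurable g ∧
    ∃ H' : Set ((ℕ → Bool) × Y), MeasurableSet H' ∧ H = Prod.map g id ⁻¹' H'

lemma isCantorPullback_empty : IsCantorPullback (∅ : Set (Ω × Y)) :=
  ⟨0, measurable_const, ∅, MeasurableSet.empty, rfl⟩

open scoped Classical in
lemma isCantorPullback_prod {A : Set Ω} {B : Set Y} (hA : MeasurableSet A)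
    (hB : MeasurableSet B) : IsCantorPullback (A ×ˢ B) := by
  refine ⟨fun ω _ => decide (ω ∈ A), measurable_pi_lambda _ fun _ => measurable_to_bool ?_,
    {x | x 0 = true} ×ˢ B, (measurableSet_eq_fun (measurable_pi_apply 0) measurable_const).prod hB,
    ?_⟩
  · convert hA
    ext
    simp
  · ext ⟨ω, y⟩
    simp

lemma IsCantorPullback.compl {H : Set (Ω × Y)} (hH : IsCantorPullback H) :
    IsCantorPullback Hᶜ := by
  obtain ⟨g, hg, H', hH', rfl⟩ := hH
  exact ⟨g, hg, H'ᶜ, hH'.compl, rfl⟩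

lemma isCantorPullback_iUnion {H : ℕ → Set (Ω × Y)} (hH : ∀ i, IsCantorPullback (H i)) :
    IsCantorPullback (⋃ i, H i) := by
  choose g hg H' hH' hH_eq using hH
  -- the sequences `g i ω` are interleaved into one along `Nat.pair`
  let G : Ω → ℕ → Bool := fun ω n => g n.unpair.1 ω n.unpair.2
  let e : ℕ → (ℕ → Bool) → ℕ → Bool := fun i x m => x (Nat.pair i m)
  have he : ∀ i, Measurable (e i) := fun i =>
    measurable_pi_lambda _ fun _ => measurable_pi_apply _
  refine ⟨G, measurable_pi_lambda _ fun n => measurable_pi_iff.1 (hg _) _,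
    ⋃ i, Prod.map (e i) id ⁻¹' H' i, .iUnion fun i => (he i).prodMap measurable_id (hH' i), ?_⟩
  ext ⟨ω, y⟩
  simp [hH_eq, G, e]

lemma _root_.MeasurableSet.isCantorPullback {H : Set (Ω × Y)} (hH : MeasurableSet H) :
    IsCantorPullback H := by
  induction H, hH using
    MeasurableSpace.induction_on_inter generateFrom_prod.symm isPiSystem_prod with
  | empty => exact isCantorPullback_empty
  | basic _ hR =>
    obtain ⟨A, hA, B, hB, rfl⟩ := hR
    exact isCantorPullback_prod hA hB
  | compl _ _ hH => exact hH.compl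
  | iUnion _ _ _ hH => exact isCantorPullback_iUnion hH

end CantorPullback

end MeasureTheory

open MeasureTheory

/-- Measurable projection theorem. -/
theorem measurable_projection {Ω Y : Type*} [MeasurableSpace Ω]
    [MetricSpace Y] [CompleteSpace Y] [SecondCountableTopology Y]
    [MeasurableSpace Y] [BorelSpace Y]
    {μ : Measure Ω} [IsFiniteMeasure μ] (hμ : μ.IsComplete)
    (H : Set (Ω × Y)) (hH : MeasurableSet H) :
    MeasurableSet {ω : Ω | ∃ y : Y, (ω, y) ∈ H} := by
  obtain ⟨g, hg, H', hH', rfl⟩ := hH.isCantorPullback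
  have hproj : {ω | ∃ y, (ω, y) ∈ Prod.map g id ⁻¹' H'} = g ⁻¹' (Prod.fst '' H') := by
    ext ω
    simp
  -- instance search for this loops through `SecondCountableTopology Bool`
  have : PolishSpace (ℕ → Bool) := {}
  have hnull : NullMeasurableSet (Prod.fst '' H') (μ.map g) :=
    (hH'.analyticSet.image_of_continuous continuous_fst).nullMeasurableSet_s14
  rw [hproj]
  exact (hnull.preimage (hg.quasiMeasurePreserving μ)).measurable_of_complete
end
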